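/- If A0, A1, A2, A3 are v×v circulant ±1 matrices with A1 = A2, A0 and A3 symmetric, and A0A0ᵀ + A1A1ᵀ + A2A2ᵀ + A3A3ᵀ = 4vI, then the propus array P built from them is a symmetric Hadamard matrix of order 4v: P = Pᵀ and P·Pᵀ = 4v·I. -/

import Mathlib

/-
Regard `P` as a `4 × 4` matrix of `v × v` blocks. The back-diagonal `R` is an involution with
`R X = Xᵀ R` for circulant `X`, so `X R` and `R X` are symmetric, and circulants commute. Since
`A1 = A2` and `A0`, `A3` are symmetric, both the block pattern and every block are symmetric, so
`P = Pᵀ`. In `P Pᵀ = P²`, pushing every `R` to the right and cancelling `R² = 1` leaves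
`A0² + 2 A1 A1ᵀ + A3²` in each diagonal block and cancelling pairs elsewhere, so
`P Pᵀ = I₄ ⊗ Σ Aᵢ Aᵢᵀ = 4v I`.
-/

open Matrix

def backDiag (v : ℕ) [NeZero v] : Matrix (ZMod v) (ZMod v) ℝ :=
  fun i j => if i + j = 0 then 1 else 0

def IsCirculant {v : ℕ} (A : Matrix (ZMod v) (ZMod v) ℝ) : Prop :=
  ∃ a : ZMod v → ℝ, ∀ i j, A i j = a (j - i)

def propus {v : ℕ} [NeZero v] (A0 A1 A2 A3 : Matrix (ZMod v) (ZMod v) ℝ) :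
    Matrix (Fin 4 × ZMod v) (Fin 4 × ZMod v) ℝ :=
  fun p q =>
    (!![-A0, A1 * backDiag v, A2 * backDiag v, A3 * backDiag v;
        A2 * backDiag v, backDiag v * A3, A0, -(backDiag v * A1);
        A1 * backDiag v, A0, -(backDiag v * A3), backDiag v * A2;
        A3 * backDiag v, -(backDiag v * A2), backDiag v * A1, A0]) p.1 q.1 p.2 q.2

def propusBlocks {S : Type*} [Ring S] (a₀ a₁ a₂ a₃ r : S) : Matrix (Fin 4) (Fin 4) S :=
  !![-a₀, a₁ * r, a₂ * r, a₃ * r;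
     a₂ * r, r * a₃, a₀, -(r * a₁);
     a₁ * r, a₀, -(r * a₃), r * a₂;
     a₃ * r, -(r * a₂), r * a₁, a₀]

theorem propusBlocks_mul_self {S : Type*} [Ring S] {a b b' c r : S}
    (hr : r * r = 1) (hra : Commute r a) (hrc : Commute r c) (hrb : r * b = b' * r)
    (hab : Commute a b) (hac : Commute a c) (hbc : Commute b c) (hbb' : Commute b b') :
    propusBlocks a b b c r * propusBlocks a b b c r =
      scalar (Fin 4) (a * a + b * b' + b * b' + c * c) := by
  have hb' : b' = r * b * r := by rw [hrb, mul_assoc, hr, mul_one]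
  have hrb' : r * b' = b * r := by rw [hb', ← mul_assoc, ← mul_assoc, hr, one_mul]
  have hab' : Commute a b' := hb' ▸ (hra.symm.mul_right hab).mul_right hra.symm
  have hcb' : Commute c b' := hb' ▸ (hrc.symm.mul_right hbc.symm).mul_right hrc.symm
  have hxrr : ∀ x, x * r * r = x := fun x => by rw [mul_assoc, hr, mul_one]
  have push : ∀ {y y'}, r * y = y' * r → ∀ x, x * r * y = x * y' * r := fun h x => by
    rw [mul_assoc, h, ← mul_assoc]
  -- `simp` moves every `r` to the right, where they cancel in pairs, and uses the commutation
  -- equations as ordered rewrite rules.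
  ext k l
  fin_cases k <;> fin_cases l <;>
    simp [propusBlocks, mul_apply, Fin.sum_univ_four, ← mul_assoc, hxrr, hrc.eq, hrb,
      push hra.eq, push hrc.eq, push hrb, push hrb', hab.eq, hac.eq, hbc.eq, hbb'.eq,
      hab'.eq, hcb'.eq] <;> abel

variable {v : ℕ}

namespace IsCirculant

variable {X : Matrix (ZMod v) (ZMod v) ℝ}

theorem exists_eq_circulant (hX : IsCirculant X) : ∃ w, X = circulant w := by
  obtain ⟨a, ha⟩ := hX
  exact ⟨fun d => a (-d), by ext i j; rw [circulant_apply, ha, neg_sub]⟩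

theorem transpose (hX : IsCirculant X) : IsCirculant Xᵀ := by
  obtain ⟨a, ha⟩ := hX
  exact ⟨fun d => a (-d), fun i j => by simp [ha]⟩

end IsCirculant

variable [NeZero v]

theorem mul_backDiag_apply {m : Type*} (M : Matrix m (ZMod v) ℝ) (i : m) (j : ZMod v) :
    (M * backDiag v) i j = M i (-j) := by
  simp [mul_apply, backDiag, add_eq_zero_iff_eq_neg]

theorem backDiag_mul_apply {n : Type*} (M : Matrix (ZMod v) n ℝ) (i : ZMod v) (j : n) :
    (backDiag v * M) i j = M (-i) j := by
  simp [mul_apply, backDiag, add_eq_zero_iff_neg_eq]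

theorem backDiag_mul_backDiag : backDiag v * backDiag v = 1 := by
  ext i j
  simp [mul_backDiag_apply, backDiag, one_apply, add_neg_eq_zero]

namespace IsCirculant

variable {X Y : Matrix (ZMod v) (ZMod v) ℝ}

theorem commute (hX : IsCirculant X) (hY : IsCirculant Y) : Commute X Y := by
  obtain ⟨x, rfl⟩ := hX.exists_eq_circulant
  obtain ⟨y, rfl⟩ := hY.exists_eq_circulant
  exact circulant_mul_comm x y

theorem backDiag_mul (hX : IsCirculant X) : backDiag v * X = Xᵀ * backDiag v := by
  obtain ⟨a, ha⟩ := hX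
  ext i j
  rw [backDiag_mul_apply, mul_backDiag_apply, transpose_apply, ha, ha]
  ring_nf

theorem commute_backDiag (hX : IsCirculant X) (hXs : Xᵀ = X) : Commute (backDiag v) X := by
  rw [commute_iff_eq, hX.backDiag_mul, hXs]

theorem transpose_mul_backDiag (hX : IsCirculant X) : (X * backDiag v)ᵀ = X * backDiag v := by
  obtain ⟨a, ha⟩ := hX
  ext i j
  rw [transpose_apply, mul_backDiag_apply, mul_backDiag_apply, ha, ha]
  ring_nf

theorem transpose_backDiag_mul (hX : IsCirculant X) : (backDiag v * X)ᵀ = backDiag v * X := by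
  obtain ⟨a, ha⟩ := hX
  ext i j
  rw [transpose_apply, backDiag_mul_apply, backDiag_mul_apply, ha, ha]
  ring_nf

end IsCirculant

theorem propus_eq_compRingEquiv (A0 A1 A2 A3 : Matrix (ZMod v) (ZMod v) ℝ) :
    propus A0 A1 A2 A3 =
      compRingEquiv (Fin 4) (ZMod v) ℝ (propusBlocks A0 A1 A2 A3 (backDiag v)) :=
  rfl

theorem abs_propus_apply {A0 A1 A2 A3 : Matrix (ZMod v) (ZMod v) ℝ}
    (h0 : ∀ i j, |A0 i j| = 1) (h1 : ∀ i j, |A1 i j| = 1) (h2 : ∀ i j, |A2 i j| = 1)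
    (h3 : ∀ i j, |A3 i j| = 1) (p q : Fin 4 × ZMod v) : |propus A0 A1 A2 A3 p q| = 1 := by
  obtain ⟨k, i⟩ := p
  obtain ⟨l, j⟩ := q
  change |propusBlocks A0 A1 A2 A3 (backDiag v) k l i j| = 1
  fin_cases k <;> fin_cases l <;>
    simp only [propusBlocks, of_apply, cons_val', cons_val_zero, cons_val_one, cons_val_two,
      cons_val_three, Fin.zero_eta, Fin.mk_one, Fin.reduceFinMk, head_cons, tail_cons,
      Matrix.neg_apply, abs_neg, mul_backDiag_apply, backDiag_mul_apply, h0, h1, h2, h3]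

theorem propus_transpose {A0 A1 A3 : Matrix (ZMod v) (ZMod v) ℝ} (hc1 : IsCirculant A1)
    (hc3 : IsCirculant A3) (h0s : A0ᵀ = A0) :
    (propus A0 A1 A1 A3)ᵀ = propus A0 A1 A1 A3 := by
  rw [propus_eq_compRingEquiv, compRingEquiv_apply, transpose_comp]
  congr 1
  refine Matrix.ext fun k l => ?_
  fin_cases k <;> fin_cases l <;>
    simp [propusBlocks, h0s, hc1.transpose_mul_backDiag, hc1.transpose_backDiag_mul,
      hc3.transpose_mul_backDiag, hc3.transpose_backDiag_mul]

theorem propus_mul_transpose {A0 A1 A3 : Matrix (ZMod v) (ZMod v) ℝ} (hc0 : IsCirculant A0)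
    (hc1 : IsCirculant A1) (hc3 : IsCirculant A3) (h0s : A0ᵀ = A0) (h3s : A3ᵀ = A3) :
    propus A0 A1 A1 A3 * (propus A0 A1 A1 A3)ᵀ = compRingEquiv (Fin 4) (ZMod v) ℝ
      (scalar (Fin 4) (A0 * A0ᵀ + A1 * A1ᵀ + A1 * A1ᵀ + A3 * A3ᵀ)) := by
  rw [propus_transpose hc1 hc3 h0s, propus_eq_compRingEquiv, ← map_mul, h0s, h3s]
  congr 1
  exact propusBlocks_mul_self backDiag_mul_backDiag (hc0.commute_backDiag h0s)
    (hc3.commute_backDiag h3s) hc1.backDiag_mul (hc0.commute hc1) (hc0.commute hc3)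
    (hc1.commute hc3) (hc1.commute hc1.transpose)

theorem compRingEquiv_scalar_smul_one {α m n : Type*} [Semiring α] [Fintype m] [DecidableEq m]
    [Fintype n] [DecidableEq n] (c : α) :
    compRingEquiv m n α (scalar m (c • 1)) = c • 1 := by
  rw [scalar_apply, smul_one_eq_diagonal, compRingEquiv_apply, comp_diagonal_diagonal fun _ _ => c,
    smul_one_eq_diagonal]

theorem stmt17_general {v : ℕ} [NeZero v]
    (A0 A1 A2 A3 : Matrix (ZMod v) (ZMod v) ℝ)
    (hc0 : IsCirculant A0) (hc1 : IsCirculant A1)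
    (hc3 : IsCirculant A3)
    (hpm : ∀ k : Fin 4, ∀ i j, (![A0, A1, A2, A3] k) i j = 1 ∨ (![A0, A1, A2, A3] k) i j = -1)
    (h12 : A1 = A2) (h0s : A0ᵀ = A0) (h3s : A3ᵀ = A3)
    (hsum : A0 * A0ᵀ + A1 * A1ᵀ + A2 * A2ᵀ + A3 * A3ᵀ =
      ((4 * v : ℝ)) • (1 : Matrix (ZMod v) (ZMod v) ℝ)) :
    (∀ p q, propus A0 A1 A2 A3 p q = 1 ∨ propus A0 A1 A2 A3 p q = -1) ∧
    (propus A0 A1 A2 A3)ᵀ = propus A0 A1 A2 A3 ∧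
    propus A0 A1 A2 A3 * (propus A0 A1 A2 A3)ᵀ =
      ((4 * v : ℝ)) • (1 : Matrix (Fin 4 × ZMod v) (Fin 4 × ZMod v) ℝ) := by
  subst h12
  have habs : ∀ k i j, |(![A0, A1, A1, A3] k) i j| = 1 := fun k i j =>
    (abs_eq zero_le_one).2 (hpm k i j)
  refine ⟨fun p q => (abs_eq zero_le_one).1 ?_, propus_transpose hc1 hc3 h0s, ?_⟩
  · exact abs_propus_apply (habs 0) (habs 1) (habs 2) (habs 3) p q
  · rw [propus_mul_transpose hc0 hc1 hc3 h0s h3s, hsum, compRingEquiv_scalar_smul_one]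

theorem stmt17 {v : ℕ} [NeZero v]
    (A0 A1 A2 A3 : Matrix (ZMod v) (ZMod v) ℝ)
    (hc0 : IsCirculant A0) (hc1 : IsCirculant A1)
    (hc2 : IsCirculant A2) (hc3 : IsCirculant A3)
    (hpm : ∀ k : Fin 4, ∀ i j, (![A0, A1, A2, A3] k) i j = 1 ∨ (![A0, A1, A2, A3] k) i j = -1)
    (h12 : A1 = A2) (h0s : A0ᵀ = A0) (h3s : A3ᵀ = A3)
    (hsum : A0 * A0ᵀ + A1 * A1ᵀ + A2 * A2ᵀ + A3 * A3ᵀ =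
      ((4 * v : ℝ)) • (1 : Matrix (ZMod v) (ZMod v) ℝ)) :
    (∀ p q, propus A0 A1 A2 A3 p q = 1 ∨ propus A0 A1 A2 A3 p q = -1) ∧
    (propus A0 A1 A2 A3)ᵀ = propus A0 A1 A2 A3 ∧
    propus A0 A1 A2 A3 * (propus A0 A1 A2 A3)ᵀ =
      ((4 * v : ℝ)) • (1 : Matrix (Fin 4 × ZMod v) (Fin 4 × ZMod v) ℝ) :=
  stmt17_general A0 A1 A2 A3 hc0 hc1 hc3 hpm h12 h0s h3s hsum
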